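/- arXiv:2402.01420 — 6 statements merged into one kernel-verified Lean document; each statement's English description precedes it below -/
import Mathlib

section
/- Suppose h, k : (0,∞) → (0,∞) are differentiable, b : (0,∞) → R is differentiable, c ∈ R, and the equations c·h = b·h' and c·k = b·k' + k·b' hold, where moreover b(r) = μ r for a constant μ. If h(r) = √2 (λ + r²)^{1/4} and k(r) = (λ + r²)^{-1/4} with λ > 0, then c = 0 and μ = 0; if λ = 0 then μ = 2c. -/
/-!
With `u = λ + r²`, a function `f = a u^p` satisfies `r f' = 2 p r² f / u`, so a soliton equation
`c f = μ r f' + ν f` becomes the polynomial identity `c u = 2 p μ r² + ν u`. For `h` and `k`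
(`p = ±1/4`) this gives `c u = μ r² / 2` and `c u = μ u - μ r² / 2`; subtracting yields `μ λ = 0`,
and then the first identity gives `c = 0` if `λ > 0` and `μ = 2c` if `λ = 0`. A single radius
`r > 0` with `u > 0` suffices.
-/

open Real Set

theorem hasDerivAt_rpow_const_add_sq (lam p : ℝ) {r : ℝ} (hu : lam + r ^ 2 ≠ 0) :
    HasDerivAt (fun r => (lam + r ^ 2) ^ p) (p * (lam + r ^ 2) ^ (p - 1) * (2 * r)) r := by
  convert ((hasDerivAt_pow 2 r).const_add lam).rpow_const (p := p) (Or.inl hu) using 1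
  ring

theorem mul_add_sq_eq_of_soliton_eq {a lam p c μ ν r d : ℝ} (ha : a ≠ 0)
    (hu : 0 < lam + r ^ 2) (hd : HasDerivAt (fun r => a * (lam + r ^ 2) ^ p) d r)
    (heq : c * (a * (lam + r ^ 2) ^ p) = μ * r * d + ν * (a * (lam + r ^ 2) ^ p)) :
    c * (lam + r ^ 2) = 2 * p * μ * r ^ 2 + ν * (lam + r ^ 2) := by
  obtain rfl := hd.unique ((hasDerivAt_rpow_const_add_sq lam p hu.ne').const_mul a)
  rw [rpow_sub_one hu.ne'] at heq
  field_simp at heq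
  linear_combination heq

theorem bryant_salamon_lambda2_soliton_vector_general (lam c μ : ℝ)
    (h' k' : ℝ → ℝ)
    (hh : ∀ r ∈ Ioi (0 : ℝ),
      HasDerivAt (fun r => Real.sqrt 2 * (lam + r ^ 2) ^ ((1 : ℝ) / 4)) (h' r) r)
    (hk : ∀ r ∈ Ioi (0 : ℝ),
      HasDerivAt (fun r => (lam + r ^ 2) ^ (-(1 : ℝ) / 4)) (k' r) r)
    (heq1 : ∀ r ∈ Ioi (0 : ℝ),
      c * (Real.sqrt 2 * (lam + r ^ 2) ^ ((1 : ℝ) / 4)) = μ * r * h' r)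
    (heq2 : ∀ r ∈ Ioi (0 : ℝ),
      c * ((lam + r ^ 2) ^ (-(1 : ℝ) / 4))
        = μ * r * k' r + μ * ((lam + r ^ 2) ^ (-(1 : ℝ) / 4))) :
    (0 < lam → c = 0 ∧ μ = 0) ∧ (lam = 0 → μ = 2 * c) := by
  set r := |lam| + 1
  have hr : r ∈ Ioi (0 : ℝ) := mem_Ioi.mpr (by positivity)
  have hu : 0 < lam + r ^ 2 := by nlinarith [neg_abs_le lam, abs_nonneg lam]
  have e1 : c * (lam + r ^ 2) = μ * r ^ 2 / 2 := by
    have := mul_add_sq_eq_of_soliton_eq (ν := 0) (by positivity) hu (hh r hr)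
      ((heq1 r hr).trans (by ring))
    linear_combination this
  have e2 : c * (lam + r ^ 2) = -(μ * r ^ 2 / 2) + μ * (lam + r ^ 2) := by
    have := mul_add_sq_eq_of_soliton_eq (a := 1) one_ne_zero hu
      (by simpa only [one_mul] using hk r hr) (by simpa only [one_mul] using heq2 r hr)
    linear_combination this
  have hμlam : μ * lam = 0 := by linear_combination e1 - e2
  constructor
  · intro hlam
    have hμ : μ = 0 := (mul_eq_zero.mp hμlam).resolve_right hlam.ne'
    have hc : c * (lam + r ^ 2) = 0 := by rw [e1, hμ]; ring
    exact ⟨(mul_eq_zero.mp hc).resolve_right hu.ne', hμ⟩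
  · rintro rfl
    have h : (μ - 2 * c) * r ^ 2 = 0 := by linear_combination -2 * e1
    exact sub_eq_zero.mp ((mul_eq_zero.mp h).resolve_right (pow_pos hr 2).ne')

open Real Set in
/-- First soliton condition on the Bryant–Salamon manifold `Λ²₋(B⁴)`:
with `h(r) = √2 (λ + r²)^{1/4}`, `k(r) = (λ + r²)^{-1/4}`, and `b(r) = μ r`, the
equations `c h = b h'` and `c k = b k' + k b'` force `c = μ = 0` when `λ > 0`,
and `μ = 2c` when `λ = 0`. -/
theorem bryant_salamon_lambda2_soliton_vector (lam c μ : ℝ) (hlam : 0 ≤ lam)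
    (h' k' : ℝ → ℝ)
    (hh : ∀ r ∈ Ioi (0 : ℝ),
      HasDerivAt (fun r => Real.sqrt 2 * (lam + r ^ 2) ^ ((1 : ℝ) / 4)) (h' r) r)
    (hk : ∀ r ∈ Ioi (0 : ℝ),
      HasDerivAt (fun r => (lam + r ^ 2) ^ (-(1 : ℝ) / 4)) (k' r) r)
    (heq1 : ∀ r ∈ Ioi (0 : ℝ),
      c * (Real.sqrt 2 * (lam + r ^ 2) ^ ((1 : ℝ) / 4)) = μ * r * h' r)
    (heq2 : ∀ r ∈ Ioi (0 : ℝ),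
      c * ((lam + r ^ 2) ^ (-(1 : ℝ) / 4))
        = μ * r * k' r + μ * ((lam + r ^ 2) ^ (-(1 : ℝ) / 4))) :
    (0 < lam → c = 0 ∧ μ = 0) ∧ (lam = 0 → μ = 2 * c) :=
  bryant_salamon_lambda2_soliton_vector_general lam c μ h' k' hh hk heq1 heq2
end

section
/- Suppose h(r) = √3 (λ + r²)^{1/3} and k(r) = 2(λ + r²)^{-1/6} with λ ≥ 0, and c, μ ∈ R satisfy c·h(r) = μ r h'(r) and c·k(r) = μ r k'(r) + μ k(r) for all r > 0. If λ > 0 then c = μ = 0; if λ = 0 then μ = (3/2) c. -/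
/-!
Since `h = √3 (λ + r²)^{1/3}` is a power of `λ + r²`, the first soliton equation `c h = μ r h'`
reduces to the polynomial identity `c (λ + r²) = (2/3) μ r²` in `r² > 0`. Comparing coefficients
gives `c = (2/3) μ` and `c λ = 0`, which is the claimed dichotomy.
-/

open Real

lemma mul_add_sq_eq_of_hasDerivAt {a lam p c μ r f' : ℝ} (ha : a ≠ 0) (hA : 0 < lam + r ^ 2)
    (hf : HasDerivAt (fun r => a * (lam + r ^ 2) ^ p) f' r)
    (h : c * (a * (lam + r ^ 2) ^ p) = μ * r * f') :
    c * (lam + r ^ 2) = 2 * p * μ * r ^ 2 := by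
  have hsq : HasDerivAt (fun r : ℝ => lam + r ^ 2) (2 * r) r := by
    simpa using (hasDerivAt_pow 2 r).const_add lam
  rw [hf.unique ((hsq.rpow_const (Or.inl hA.ne')).const_mul a), rpow_sub_one hA.ne'] at h
  field_simp at h
  linear_combination h

lemma eq_and_mul_eq_zero_of_forall_pos {c lam κ : ℝ}
    (h : ∀ r : ℝ, 0 < r → c * (lam + r ^ 2) = κ * r ^ 2) : c = κ ∧ c * lam = 0 := by
  have h1 := h 1 one_pos
  have h2 := h 2 two_pos
  constructor <;> linarith

open Real Set in
theorem bryant_salamon_spinor_soliton_vector_general (lam c μ : ℝ) (hlam : 0 ≤ lam)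
    (h' : ℝ → ℝ)
    (hh : ∀ r ∈ Ioi (0 : ℝ),
      HasDerivAt (fun r => Real.sqrt 3 * (lam + r ^ 2) ^ ((1 : ℝ) / 3)) (h' r) r)
    (heq1 : ∀ r ∈ Ioi (0 : ℝ),
      c * (Real.sqrt 3 * (lam + r ^ 2) ^ ((1 : ℝ) / 3)) = μ * r * h' r) :
    (0 < lam → c = 0 ∧ μ = 0) ∧ (lam = 0 → μ = (3 / 2) * c) := by
  have hquad : ∀ r : ℝ, 0 < r → c * (lam + r ^ 2) = (2 / 3 * μ) * r ^ 2 := fun r hr => by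
    have := mul_add_sq_eq_of_hasDerivAt (by positivity) (by positivity) (hh r hr) (heq1 r hr)
    linear_combination this
  obtain ⟨hc, hclam⟩ := eq_and_mul_eq_zero_of_forall_pos hquad
  refine ⟨fun hpos => ?_, fun _ => by linarith⟩
  have hc0 : c = 0 := (mul_eq_zero.mp hclam).resolve_right hpos.ne'
  exact ⟨hc0, by linarith⟩

open Real Set in
/-- First soliton condition on the Bryant–Salamon spinor bundle of `S³`:
with `h(r) = √3 (λ + r²)^{1/3}`, `k(r) = 2 (λ + r²)^{-1/6}`, and `Y = μ r ∂/∂r`, the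
equations `c h = μ r h'` and `c k = μ r k' + μ k` force `c = μ = 0` when `λ > 0`,
and `μ = (3/2) c` when `λ = 0`. -/
theorem bryant_salamon_spinor_soliton_vector (lam c μ : ℝ) (hlam : 0 ≤ lam)
    (h' k' : ℝ → ℝ)
    (hh : ∀ r ∈ Ioi (0 : ℝ),
      HasDerivAt (fun r => Real.sqrt 3 * (lam + r ^ 2) ^ ((1 : ℝ) / 3)) (h' r) r)
    (hk : ∀ r ∈ Ioi (0 : ℝ),
      HasDerivAt (fun r => 2 * (lam + r ^ 2) ^ (-(1 : ℝ) / 6)) (k' r) r)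
    (heq1 : ∀ r ∈ Ioi (0 : ℝ),
      c * (Real.sqrt 3 * (lam + r ^ 2) ^ ((1 : ℝ) / 3)) = μ * r * h' r)
    (heq2 : ∀ r ∈ Ioi (0 : ℝ),
      c * (2 * (lam + r ^ 2) ^ (-(1 : ℝ) / 6))
        = μ * r * k' r + μ * (2 * (lam + r ^ 2) ^ (-(1 : ℝ) / 6))) :
    (0 < lam → c = 0 ∧ μ = 0) ∧ (lam = 0 → μ = (3 / 2) * c) :=
  bryant_salamon_spinor_soliton_vector_general lam c μ hlam h' hh heq1
end

section
/- Let u = Σ_{k≥1} a_k r^k be a formal power series with zero constant term, and suppose a_2 = a_4 = ⋯ = a_{2j} = 0 for some j ≥ 1. Then the coefficient of r^{2j+2} in sin(u) equals a_{2j+2}. -/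
open PowerSeries in
/-- The `k`-th coefficient of the composition `sin(u)` where `u = Σ_{m≥1} a_m r^m`
is a power series with zero constant term: it is given by the (finite) sum
`Σ_n (-1)^n/(2n+1)! · [r^k] u^{2n+1}`. -/
noncomputable def sinCompCoeff (a : ℕ → ℝ) (k : ℕ) : ℝ :=
  ∑ n ∈ Finset.range (k + 1),
    ((-1 : ℝ) ^ n / (Nat.factorial (2 * n + 1))) *
      PowerSeries.coeff k ((PowerSeries.mk a) ^ (2 * n + 1))

/-!
Only the term `u` of `sin u = u - u³/3! + ⋯` contributes to `[r^{2j+2}]`. Indeed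
`[r^{2j+2}] u^{2n+1}` is a sum of products `a_{l₀} ⋯ a_{l_{2n}}` over compositions of `2j+2`
into `2n+1` parts. A part `0` kills the product since `a₀ = 0`; otherwise an odd number of
positive parts with even sum has an even part, which for `n ≥ 1` lies between `2` and `2j`,
so its coefficient vanishes.
-/

namespace Finset

variable {ι : Type*}

theorem exists_even_of_even_sum_of_odd_card {s : Finset ι} (f : ι → ℕ) (hs : Odd #s)
    (hsum : Even (∑ i ∈ s, f i)) : ∃ i ∈ s, Even (f i) := by
  by_contra! hodd
  have hfilter : {x ∈ s | Odd (f x)} = s :=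
    filter_true_of_mem fun i hi ↦ Nat.not_even_iff_odd.1 (hodd i hi)
  rw [even_sum_iff_even_card_odd, hfilter] at hsum
  exact Nat.not_even_iff_odd.2 hs hsum

theorem add_card_erase_le_sum [DecidableEq ι] {s : Finset ι} {f : ι → ℕ} {i : ι}
    (hi : i ∈ s) (hpos : ∀ x ∈ s, 1 ≤ f x) : f i + #(s.erase i) ≤ ∑ x ∈ s, f x := by
  rw [← add_sum_erase s f hi]
  gcongr
  simpa using card_nsmul_le_sum (s.erase i) f 1 fun x hx ↦ hpos x (mem_of_mem_erase hx)

end Finset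

namespace PowerSeries

theorem coeff_mk_pow_odd_eq_zero {R : Type*} [CommSemiring R] {a : ℕ → R} (h0 : a 0 = 0)
    {j : ℕ} (heven : ∀ i, 1 ≤ i → i ≤ j → a (2 * i) = 0) {n : ℕ} (hn : 1 ≤ n) :
    coeff (2 * j + 2) (mk a ^ (2 * n + 1)) = 0 := by
  rw [coeff_pow]
  refine Finset.sum_eq_zero fun l hl ↦ ?_
  have hsum : ∑ i ∈ Finset.range (2 * n + 1), l i = 2 * j + 2 :=
    (Finset.mem_finsuppAntidiag.1 hl).1
  by_cases hzero : ∃ i ∈ Finset.range (2 * n + 1), l i = 0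
  · obtain ⟨i, hi, hli⟩ := hzero
    exact Finset.prod_eq_zero hi (by simp [hli, h0])
  push Not at hzero
  obtain ⟨i, hi, m, hm⟩ := Finset.exists_even_of_even_sum_of_odd_card l
    (by rw [Finset.card_range]; exact odd_two_mul_add_one n)
    (by rw [hsum]; exact ⟨j + 1, by ring⟩)
  have hbound := Finset.add_card_erase_le_sum hi fun x hx ↦
    Nat.one_le_iff_ne_zero.2 (hzero x hx)
  rw [hsum, Finset.card_erase_of_mem hi, Finset.card_range] at hbound
  have hm_pos : 1 ≤ m := by have := hzero i hi; omega
  refine Finset.prod_eq_zero hi ?_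
  rw [coeff_mk, hm, ← two_mul, heven m hm_pos (by omega)]

end PowerSeries

theorem sin_composition_even_coefficient_general (a : ℕ → ℝ) (h0 : a 0 = 0)
    (j : ℕ)
    (heven : ∀ i, 1 ≤ i → i ≤ j → a (2 * i) = 0) :
    sinCompCoeff a (2 * j + 2) = a (2 * j + 2) := by
  unfold sinCompCoeff
  rw [Finset.sum_eq_single 0]
  · simp
  · intro n _ hn
    rw [PowerSeries.coeff_mk_pow_odd_eq_zero h0 heven (Nat.one_le_iff_ne_zero.2 hn), mul_zero]
  · exact fun h ↦ absurd (Finset.mem_range.2 (Nat.succ_pos _)) h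

/-- If `u = Σ_{k≥1} a_k r^k` has zero constant term and `a₂ = a₄ = ⋯ = a_{2j} = 0`
for some `j ≥ 1`, then the coefficient of `r^{2j+2}` in `sin(u)` equals `a_{2j+2}`. -/
theorem sin_composition_even_coefficient (a : ℕ → ℝ) (h0 : a 0 = 0)
    (j : ℕ) (hj : 1 ≤ j)
    (heven : ∀ i, 1 ≤ i → i ≤ j → a (2 * i) = 0) :
    sinCompCoeff a (2 * j + 2) = a (2 * j + 2) :=
  sin_composition_even_coefficient_general a h0 j heven
end

section
/- Any formal power series solution u = Σ_{k≥1} a_k r^k of the equation r² u'' + (d - c r²)/(1 + b r²) · r u' - (d + e r² + f r⁴)/(1 + b r²)² · sin u = 0 (equivalently of the cleared-denominator equation (1+br²)² r² u'' + (1+br²)(d - c r²) r u' - (d + e r² + f r⁴) sin u = 0) with d > 0 must have a_2 = 0, and more generally all even coefficients vanish: a_{2j} = 0 for all j ≥ 1. Thus u is an odd formal power series. -/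
/-!
By strong induction on `j`: once the even coefficients of `u` below `K = 2j` vanish, `u` is odd
up to order `K`, so every odd power `u ^ (2n+1)` with `n ≥ 1` has no even coefficient up to
degree `K`, and `sin u` agrees with `u` in all even degrees `≤ K`. The coefficient functions of
the equation are even in `r`, so the degree-`K` coefficient of the equation sees only the
degree-`K` coefficients of `u` and `sin u` and reads `(K - 1) (K + d) a_K = 0`.
-/

namespace PowerSeries

variable {R : Type*} [CommRing R]

theorem coeff_X_mul_derivative (f : R⟦X⟧) (n : ℕ) :
    coeff n (X * derivative R f) = n * coeff n f := by
  cases n with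
  | zero => simp
  | succ n => rw [coeff_succ_X_mul, coeff_derivative]; push_cast; ring

theorem coeff_X_sq_mul_derivative_derivative (f : R⟦X⟧) (n : ℕ) :
    coeff n (X ^ 2 * derivative R (derivative R f)) = n * (n - 1) * coeff n f := by
  rcases n with _ | _ | n
  · simp
  · simp [pow_two, mul_assoc]
  · rw [add_assoc, coeff_X_pow_mul, coeff_derivative, coeff_derivative]; push_cast; ring

/-- The first even coefficient of `p` enters `p ^ m` only through `X ^ K * p ^ (m - 1)`, which has
order at least `K + m - 1`. -/
theorem coeff_pow_eq_zero_of_odd_add {p : R⟦X⟧} {K : ℕ} (h0 : constantCoeff p = 0)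
    (hp : ∀ i, Even i → i < K → coeff i p = 0) (m : ℕ) :
    ∀ n, Odd (n + m) → n + 1 < K + m → coeff n (p ^ m) = 0 := by
  induction m with
  | zero =>
    intro n hn _
    rw [pow_zero, coeff_one, if_neg (by rintro rfl; simp at hn)]
  | succ m ih =>
    intro n hn hnK
    rw [pow_succ', coeff_mul]
    refine Finset.sum_eq_zero fun ⟨i, k⟩ hik => ?_
    rw [Finset.HasAntidiagonal.mem_antidiagonal] at hik
    dsimp only at hik ⊢
    rcases Nat.even_or_odd i with hi | hi
    · by_cases hiK : i < K
      · rw [hp i hi hiK, zero_mul]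
      · have : k < m := by omega
        rw [coeff_of_lt_order k ((Nat.cast_lt.mpr this).trans_le
          (le_order_pow_of_constantCoeff_eq_zero m h0)), mul_zero]
    · have := hi.pos
      rw [ih k (by subst hik; grind) (by omega), mul_zero]

theorem rescale_C (a r : R) : rescale a (C r) = C r := by
  ext n
  rcases n with _ | n <;> simp [coeff_C]

variable [IsDomain R] [CharZero R]

theorem coeff_eq_zero_of_rescale_neg_one_eq {h : R⟦X⟧} (hh : rescale (-1) h = h) {i : ℕ}
    (hi : Odd i) : coeff i h = 0 := by
  have := congrArg (coeff i) hh
  rwa [coeff_rescale, hi.neg_one_pow, neg_one_mul, CharZero.neg_eq_self_iff] at this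

theorem coeff_mul_eq_constantCoeff_mul {h g : R⟦X⟧} {K : ℕ} (hK : Even K)
    (hh : rescale (-1) h = h) (hg : ∀ n, Even n → n < K → coeff n g = 0) :
    coeff K (h * g) = constantCoeff h * coeff K g := by
  rw [coeff_mul, Finset.sum_eq_single (0, K)]
  · rw [coeff_zero_eq_constantCoeff_apply]
  · rintro ⟨i, k⟩ hik hne
    rw [Finset.HasAntidiagonal.mem_antidiagonal] at hik
    dsimp only at hik ⊢
    rcases Nat.even_or_odd i with hi | hi
    · rw [hg k (by subst hik; exact (Nat.even_add.mp hK).mp hi) (by grind), mul_zero]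
    · rw [coeff_eq_zero_of_rescale_neg_one_eq hh hi, zero_mul]
  · simp

end PowerSeries

open PowerSeries

theorem sinCompCoeff_eq_of_even {a : ℕ → ℝ} {K k : ℕ} (h0 : a 0 = 0)
    (ha : ∀ i, Even i → i < K → a i = 0) (hk : Even k) (hkK : k ≤ K) :
    sinCompCoeff a k = a k := by
  rw [sinCompCoeff, Finset.sum_eq_single 0]
  · simp
  · intro n _ hn
    rw [coeff_pow_eq_zero_of_odd_add (by simpa using h0) (by simpa using ha) _ k
      (by rw [← add_assoc]; exact (hk.add (even_two_mul n)).add_one) (by omega), mul_zero]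
  · simp

noncomputable def odeLHS (b c d e f : ℝ) (a : ℕ → ℝ) : ℝ⟦X⟧ :=
  (1 + C b * X ^ 2) ^ 2 * (X ^ 2 * derivative ℝ (derivative ℝ (mk a)))
    + (1 + C b * X ^ 2) * (C d - C c * X ^ 2) * (X * derivative ℝ (mk a))
    - (C d + C e * X ^ 2 + C f * X ^ 4) * mk (sinCompCoeff a)

theorem coeff_odeLHS_of_even {b c d e f : ℝ} {a : ℕ → ℝ} {K : ℕ} (h0 : a 0 = 0)
    (hK : Even K) (ha : ∀ n, Even n → n < K → a n = 0) :
    coeff K (odeLHS b c d e f a) = (K - 1) * (K + d) * a K := by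
  have hsin (n : ℕ) (hn : Even n) (hnK : n ≤ K) : coeff n (mk (sinCompCoeff a)) = a n := by
    rw [coeff_mk, sinCompCoeff_eq_of_even h0 ha hn hnK]
  rw [odeLHS, map_sub, map_add,
    coeff_mul_eq_constantCoeff_mul (g := X ^ 2 * derivative ℝ (derivative ℝ (mk a))) hK
      (by simp only [map_add, map_mul, map_pow, map_one, rescale_C, rescale_neg_one_X]; ring)
      fun n hn hnK => by
        rw [coeff_X_sq_mul_derivative_derivative, coeff_mk, ha n hn hnK, mul_zero],
    coeff_mul_eq_constantCoeff_mul (g := X * derivative ℝ (mk a)) hK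
      (by
        simp only [map_add, map_sub, map_mul, map_pow, map_one, rescale_C, rescale_neg_one_X]
        ring)
      fun n hn hnK => by rw [coeff_X_mul_derivative, coeff_mk, ha n hn hnK, mul_zero],
    coeff_mul_eq_constantCoeff_mul (g := mk (sinCompCoeff a)) hK
      (by simp only [map_add, map_mul, map_pow, rescale_C, rescale_neg_one_X]; ring)
      fun n hn hnK => by rw [hsin n hn hnK.le, ha n hn hnK],
    coeff_X_sq_mul_derivative_derivative, coeff_X_mul_derivative, hsin K hK le_rfl, coeff_mk]
  simp only [map_add, map_sub, map_mul, map_pow, map_one, constantCoeff_C, constantCoeff_X,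
    zero_pow two_ne_zero, zero_pow four_ne_zero, mul_zero, add_zero, sub_zero, one_pow]
  ring

theorem formal_solution_is_odd_general (b c d e f : ℝ)
    (hd : 0 < d)
    (a : ℕ → ℝ) (h0 : a 0 = 0)
    (hode :
      ((1 + PowerSeries.C b * PowerSeries.X ^ 2) ^ 2) *
          (PowerSeries.X ^ 2 *
            PowerSeries.derivativeFun (PowerSeries.derivativeFun (PowerSeries.mk a)))
        + (1 + PowerSeries.C b * PowerSeries.X ^ 2) *
            (PowerSeries.C d - PowerSeries.C c * PowerSeries.X ^ 2) *
            (PowerSeries.X * PowerSeries.derivativeFun (PowerSeries.mk a))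
        - (PowerSeries.C d + PowerSeries.C e * PowerSeries.X ^ 2
            + PowerSeries.C f * PowerSeries.X ^ 4) *
            PowerSeries.mk (sinCompCoeff a) = 0) :
    ∀ j : ℕ, 1 ≤ j → a (2 * j) = 0 := by
  intro j
  induction j using Nat.strong_induction_on with
  | _ j ih =>
    intro hj
    have ha : ∀ n, Even n → n < 2 * j → a n = 0 := by
      rintro n ⟨i, rfl⟩ hi
      rcases Nat.eq_zero_or_pos i with rfl | hi0
      · exact h0
      · rw [← two_mul]; exact ih i (by omega) hi0
    have hK := congrArg (coeff (2 * j)) (show odeLHS b c d e f a = 0 from hode)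
    rw [coeff_odeLHS_of_even h0 (even_two_mul j) ha, map_zero] at hK
    refine (mul_eq_zero.mp hK).resolve_left (mul_ne_zero ?_ ?_)
    · have : (1 : ℝ) < 2 * j := by exact_mod_cast (by omega : 1 < 2 * j)
      push_cast; linarith
    · positivity

open PowerSeries in
/-- Any formal power series solution `u = Σ_{k≥1} a_k r^k` of the (cleared-denominator)
ODE `(1+br²)² r² u'' + (1+br²)(d - cr²) r u' - (d + er² + fr⁴) sin u = 0` with `d > 0`
and `b, e, f ≥ 0` has all even coefficients zero: `a_{2j} = 0` for all `j ≥ 1`,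
i.e. `u` is an odd formal power series. -/
theorem formal_solution_is_odd (b c d e f : ℝ)
    (hd : 0 < d) (hb : 0 ≤ b) (he : 0 ≤ e) (hf : 0 ≤ f)
    (a : ℕ → ℝ) (h0 : a 0 = 0)
    (hode :
      ((1 + PowerSeries.C b * PowerSeries.X ^ 2) ^ 2) *
          (PowerSeries.X ^ 2 *
            PowerSeries.derivativeFun (PowerSeries.derivativeFun (PowerSeries.mk a)))
        + (1 + PowerSeries.C b * PowerSeries.X ^ 2) *
            (PowerSeries.C d - PowerSeries.C c * PowerSeries.X ^ 2) *
            (PowerSeries.X * PowerSeries.derivativeFun (PowerSeries.mk a))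
        - (PowerSeries.C d + PowerSeries.C e * PowerSeries.X ^ 2
            + PowerSeries.C f * PowerSeries.X ^ 4) *
            PowerSeries.mk (sinCompCoeff a) = 0) :
    ∀ j : ℕ, 1 ≤ j → a (2 * j) = 0 :=
  formal_solution_is_odd_general b c d e f hd a h0 hode
end

section
/- Let d > 0 and c ≤ 0 be constants, and let u, z : R → R be differentiable and satisfy du/dx = z and dz/dx = (c e^{2x} - (d-1)) z + d sin u. Define L(x) = z(x)²/2 + d cos u(x). Then dL/dx = (c e^{2x} - (d-1)) z² ≤ 0 for all x when d ≥ 1, so L is nonincreasing; in particular z is bounded on [x₀, ∞) for any x₀. -/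
/-!
`L = z²/2 + d cos u` is the energy of a damped pendulum `u'' = a(x) u' + d sin u`: differentiating
along solutions, the potential terms cancel and `L' = a(x) z²`. For `a(x) = c e^{2x} - (d - 1)`
with `c ≤ 0 ≤ d - 1` the damping is nonpositive, so `L` decreases, and `z²/2 ≤ L(x₀) + d` on
`[x₀, ∞)` because `d cos u ≥ -d`.
-/

open Real

theorem hasDerivAt_pendulum_energy {u z a : ℝ → ℝ} {d x : ℝ}
    (hu : HasDerivAt u (z x) x) (hz : HasDerivAt z (a x * z x + d * sin (u x)) x) :
    HasDerivAt (fun x => z x ^ 2 / 2 + d * cos (u x)) (a x * z x ^ 2) x := by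
  have hkin := (hz.pow 2).div_const 2
  have hpot := ((hasDerivAt_cos (u x)).comp x hu).const_mul d
  exact (hkin.add hpot).congr_deriv (by push_cast; ring)

theorem abs_le_sqrt_of_pendulum_energy_le {d y v K : ℝ} (hd : 0 ≤ d)
    (hE : y ^ 2 / 2 + d * cos v ≤ K) : |y| ≤ √(2 * (K + d)) := by
  have hcos : -d ≤ d * cos v := by nlinarith [neg_one_le_cos v]
  rw [← sqrt_sq_eq_abs]
  exact sqrt_le_sqrt (by linarith)

theorem soliton_damping_nonpos {c d : ℝ} (hc : c ≤ 0) (hd : 1 ≤ d) (x : ℝ) :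
    c * exp (2 * x) - (d - 1) ≤ 0 := by
  nlinarith [exp_pos (2 * x)]

/-- For the flat/nearly-Kähler soliton system with `c ≤ 0` and `d ≥ 1`, the quantity
`L = z²/2 + d cos u` satisfies `dL/dx = (c e^{2x} - (d-1)) z² ≤ 0`, so `L` is
nonincreasing; in particular `z` is bounded on `[x₀, ∞)` for any `x₀`. -/
theorem flat_soliton_lyapunov (c d : ℝ) (hc : c ≤ 0) (hd : 1 ≤ d)
    (u z : ℝ → ℝ)
    (hu : ∀ x, HasDerivAt u (z x) x)
    (hz : ∀ x, HasDerivAt z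
      ((c * exp (2 * x) - (d - 1)) * z x + d * sin (u x)) x) :
    (∀ x, HasDerivAt (fun x => (z x) ^ 2 / 2 + d * cos (u x))
        ((c * exp (2 * x) - (d - 1)) * (z x) ^ 2) x) ∧
    (∀ x, (c * exp (2 * x) - (d - 1)) * (z x) ^ 2 ≤ 0) ∧
    Antitone (fun x => (z x) ^ 2 / 2 + d * cos (u x)) ∧
    (∀ x₀ : ℝ, ∃ M : ℝ, ∀ x, x₀ ≤ x → |z x| ≤ M) := by
  have hL x := hasDerivAt_pendulum_energy (a := fun x => c * exp (2 * x) - (d - 1)) (hu x) (hz x)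
  have hL_nonpos x : (c * exp (2 * x) - (d - 1)) * z x ^ 2 ≤ 0 :=
    mul_nonpos_of_nonpos_of_nonneg (soliton_damping_nonpos hc hd x) (sq_nonneg _)
  have hanti := antitone_of_hasDerivAt_nonpos hL hL_nonpos
  exact ⟨hL, hL_nonpos, hanti, fun x₀ => ⟨_, fun x hx =>
    abs_le_sqrt_of_pendulum_energy_le (by linarith) (hanti hx)⟩⟩
end

section
/- Let A(x) = 1 + b e^{2x}, B(x) = d + e·e^{2x} + f·e^{4x} with constants b, d, e, f, c, and let u, z be differentiable with u' = z and z' = (1 - (d - c e^{2x})/A) z + (B/A²) sin u. Define L = (1/2) A² z² + B cos u. Then L' = A² z² [ A'/A + 1 - (d - c e^{2x})/A - B'/(2B) ] + (B'/B) L, provided B > 0. -/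
/-!
Along a solution, `L' = A A' z² + A² z z' + B' cos u - B z sin u`. Substituting the equation for
`z'`, the term `(B/A²) sin u` contributes `B z sin u`, which cancels the last term, leaving
`A A' z² + A² p z² + B' cos u` with `p = 1 - (d - c e^{2x})/A`. Adding and subtracting
`(B'/2B) A² z²` rewrites this as the stated combination of `A² z²` and `L`.
-/

open Real

theorem hasDerivAt_exp_const_mul (k x : ℝ) :
    HasDerivAt (fun x => exp (k * x)) (k * exp (k * x)) x :=
  ((hasDerivAt_id' x).const_mul k).exp.congr_deriv (by ring)

theorem hasDerivAt_lyapunov {A B u z : ℝ → ℝ} {A' B' p x : ℝ}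
    (hA : HasDerivAt A A' x) (hB : HasDerivAt B B' x) (hu : HasDerivAt u (z x) x)
    (hz : HasDerivAt z (p * z x + B x / A x ^ 2 * sin (u x)) x) (hA0 : A x ≠ 0) :
    HasDerivAt (fun x => 1 / 2 * A x ^ 2 * z x ^ 2 + B x * cos (u x))
      (A x * A' * z x ^ 2 + A x ^ 2 * p * z x ^ 2 + B' * cos (u x)) x := by
  refine ((((hA.fun_pow 2).const_mul (1 / 2)).fun_mul (hz.fun_pow 2)).fun_add
    (hB.fun_mul hu.cos)).congr_deriv ?_
  field_simp
  ring

theorem lyapunov_derivative_eq {A B z c A' B' p : ℝ} (hA : A ≠ 0) (hB : B ≠ 0) :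
    A * A' * z ^ 2 + A ^ 2 * p * z ^ 2 + B' * c
      = A ^ 2 * z ^ 2 * (A' / A + p - B' / (2 * B))
        + B' / B * (1 / 2 * A ^ 2 * z ^ 2 + B * c) := by
  field_simp
  ring

/-- With `A(x) = 1 + b e^{2x}`, `B(x) = d + e·e^{2x} + f·e^{4x} > 0`, and `(u,z)` solving
`u' = z`, `z' = (1 - (d - c e^{2x})/A) z + (B/A²) sin u`, the Lyapunov quantity
`L = (1/2) A² z² + B cos u` satisfies
`L' = A² z² [A'/A + 1 - (d - c e^{2x})/A - B'/(2B)] + (B'/B) L`. -/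
theorem bryant_salamon_lyapunov_derivative (b c d e f : ℝ) (hb : 0 ≤ b)
    (hB : ∀ x : ℝ, 0 < d + e * exp (2 * x) + f * exp (4 * x))
    (u z : ℝ → ℝ)
    (hu : ∀ x, HasDerivAt u (z x) x)
    (hz : ∀ x, HasDerivAt z
      ((1 - (d - c * exp (2 * x)) / (1 + b * exp (2 * x))) * z x
        + ((d + e * exp (2 * x) + f * exp (4 * x)) / (1 + b * exp (2 * x)) ^ 2)
            * sin (u x)) x) :
    ∀ x, HasDerivAt
      (fun x => (1 / 2) * (1 + b * exp (2 * x)) ^ 2 * (z x) ^ 2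
        + (d + e * exp (2 * x) + f * exp (4 * x)) * cos (u x))
      ((1 + b * exp (2 * x)) ^ 2 * (z x) ^ 2 *
          ((2 * b * exp (2 * x)) / (1 + b * exp (2 * x)) + 1
            - (d - c * exp (2 * x)) / (1 + b * exp (2 * x))
            - (2 * e * exp (2 * x) + 4 * f * exp (4 * x))
                / (2 * (d + e * exp (2 * x) + f * exp (4 * x))))
        + ((2 * e * exp (2 * x) + 4 * f * exp (4 * x))
              / (d + e * exp (2 * x) + f * exp (4 * x))) *
            ((1 / 2) * (1 + b * exp (2 * x)) ^ 2 * (z x) ^ 2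
              + (d + e * exp (2 * x) + f * exp (4 * x)) * cos (u x))) x := by
  intro x
  have hA0 : 0 < 1 + b * exp (2 * x) := by positivity
  have hA : HasDerivAt (fun x => 1 + b * exp (2 * x)) (2 * b * exp (2 * x)) x :=
    (((hasDerivAt_exp_const_mul 2 x).const_mul b).const_add 1).congr_deriv (by ring)
  have hB' : HasDerivAt (fun x => d + e * exp (2 * x) + f * exp (4 * x))
      (2 * e * exp (2 * x) + 4 * f * exp (4 * x)) x :=
    ((((hasDerivAt_exp_const_mul 2 x).const_mul e).const_add d).add
      ((hasDerivAt_exp_const_mul 4 x).const_mul f)).congr_deriv (by ring)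
  refine (hasDerivAt_lyapunov hA hB' (hu x) (hz x) hA0.ne').congr_deriv ?_
  rw [lyapunov_derivative_eq hA0.ne' (hB x).ne']
  ring
end
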